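/- Under the decentralized-memory setup, for every k ∈ {0, 1,…, n(d−1)/6 − 1} and every τ with 0 ≤ τ < (k+1)·τ_com, the following inclusion holds, where p = ⌊3k/n⌋ and q = k mod (n/3): mem_i(τ) ⊆ K_{2p+2} if i ∈ V_1 or (i ∈ V_3 and i ≤ 2n/3 + q + 1), and mem_i(τ) ⊆ K_{2p+1} if i ∈ V_2 or (i ∈ V_3 and i > 2n/3 + q + 1). -/

import Mathlib

open scoped BigOperators RealInnerProductSpace Classical

noncomputable section

/-- The `k`-th standard basis vector of `ℝ^d`, `0`-indexed (so the paper's `e_k` is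
`stdBasis d (k-1)`); out-of-range indices give `0`. -/
def stdBasis (d j : ℕ) : EuclideanSpace ℝ (Fin d) :=
  if h : j < d then EuclideanSpace.single ⟨j, h⟩ 1 else 0

/-- The subgradient oracle `∇̂h_j` (paper's `1`-indexed `j`, so `e_{j+1} = stdBasis d j`
and `e_j = stdBasis d (j-1)`). -/
def gradh (d j : ℕ) (x : EuclideanSpace ℝ (Fin d)) : EuclideanSpace ℝ (Fin d) :=
  if ⟪stdBasis d (j - 1), x⟫ < ⟪stdBasis d j, x⟫ then stdBasis d j - stdBasis d (j - 1)
  else if ⟪stdBasis d j, x⟫ < ⟪stdBasis d (j - 1), x⟫ then stdBasis d (j - 1) - stdBasis d j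
  else 0

/-- `K_j = span{e_1, …, e_j}`. -/
def Ksub (d j : ℕ) : Submodule ℝ (EuclideanSpace ℝ (Fin d)) :=
  Submodule.span ℝ {v | ∃ i < j, v = stdBasis d i}

/-- The subgradient oracle `∇̂f_i` (nodes `i` are `1`-indexed, `i ∈ {1,…,n}`). -/
def oracle (d n : ℕ) (a : ℝ) (i : ℕ) (x : EuclideanSpace ℝ (Fin d)) :
    EuclideanSpace ℝ (Fin d) :=
  if i ≤ n / 3 then
    a • (∑ j ∈ Finset.Icc 1 ((d - 1) / 2), gradh d (2 * j - 1) x) - a • stdBasis d 0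
  else if i ≤ 2 * n / 3 then
    a • ∑ j ∈ Finset.Icc 1 ((d - 1) / 2), gradh d (2 * j) x
  else 0

/-- The time-varying center node `i_c(τ) = 2n/3 + 1 + (⌊τ/τ_com⌋ mod (n/3))`. -/
def center (n : ℕ) (τcom τ : ℝ) : ℕ := 2 * n / 3 + 1 + (⌊τ / τcom⌋₊ % (n / 3))

/-- The set of `j` such that `(j, i) ∈ E(τ)` for the star graph with center `i_c(τ)`. -/
def inEdges (n : ℕ) (τcom τ : ℝ) (i : ℕ) : Set ℕ :=
  {j | 1 ≤ j ∧ j ≤ n ∧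
    ((j = center n τcom τ ∧ i ≠ center n τcom τ) ∨
     (i = center n τcom τ ∧ j ≠ center n τcom τ))}

/-- `memloc_i(τ)`: memory obtainable by a local subgradient computation. -/
def memloc (d : ℕ) (τsub : ℝ)
    (gfun : ℕ → EuclideanSpace ℝ (Fin d) → EuclideanSpace ℝ (Fin d))
    (mem : ℕ → ℝ → Set (EuclideanSpace ℝ (Fin d))) (i : ℕ) (τ : ℝ) :
    Set (EuclideanSpace ℝ (Fin d)) :=
  if τsub ≤ τ then
    ↑(Submodule.span ℝ (mem i (τ - τsub) ∪ (gfun i '' mem i (τ - τsub))))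
  else ∅

/-- `memcom_i(τ)`: memory obtainable by decentralized communication. -/
def memcom (d n : ℕ) (τcom : ℝ)
    (mem : ℕ → ℝ → Set (EuclideanSpace ℝ (Fin d))) (i : ℕ) (τ : ℝ) :
    Set (EuclideanSpace ℝ (Fin d)) :=
  if τcom ≤ τ then
    ↑(Submodule.span ℝ (⋃ j ∈ inEdges n τcom τ i, mem j (τ - τcom)))
  else ∅

/-!
A vector of `K_L` has no coordinates beyond `e_L`, so `∇̂h_j` maps it back into `K_L` unless
`j = L`. The oracles of `V_1` only involve odd `j` and those of `V_2` only even `j`: a node of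
`V_1` can push `K_{2p+1}` to `K_{2p+2}`, a node of `V_2` can push `K_{2p+2}` to `K_{2p+3}`, and
neither can go further on its own. The new coordinate must therefore travel from `V_1` to `V_2`
through the nodes of `V_3`, each of which is the star center for one round of length `τ_com`
only; so during the rounds `k = p (n/3) + q` of the `p`-th sweep through `V_3` the level `2p + 2`
has reached only `V_1` and the first `q + 1` nodes of `V_3`. This invariant is proved by
induction on time in steps of `min τ_com τ_sub`.
-/

theorem inner_stdBasis_stdBasis_of_ne (d : ℕ) {i j : ℕ} (h : i ≠ j) :
    ⟪stdBasis d i, stdBasis d j⟫ = 0 := by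
  unfold stdBasis
  split_ifs <;> simp [EuclideanSpace.inner_single_left, h]

theorem stdBasis_mem_Ksub (d : ℕ) {i j : ℕ} (h : i < j) : stdBasis d i ∈ Ksub d j :=
  Submodule.subset_span ⟨i, h, rfl⟩

theorem Ksub_mono (d : ℕ) {j j' : ℕ} (h : j ≤ j') : Ksub d j ≤ Ksub d j' :=
  Submodule.span_mono fun _ ⟨i, hi, hv⟩ => ⟨i, hi.trans_le h, hv⟩

theorem inner_stdBasis_eq_zero_of_mem_Ksub {d L j : ℕ} {x : EuclideanSpace ℝ (Fin d)}
    (hx : x ∈ Ksub d L) (hj : L ≤ j) : ⟪stdBasis d j, x⟫ = 0 := by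
  have hker : Ksub d L ≤ LinearMap.ker (innerₛₗ ℝ (stdBasis d j)) := by
    refine Submodule.span_le.mpr ?_
    rintro _ ⟨i, hi, rfl⟩
    exact inner_stdBasis_stdBasis_of_ne d (by omega)
  exact hker hx

theorem gradh_mem_Ksub (d j : ℕ) (x : EuclideanSpace ℝ (Fin d)) :
    gradh d j x ∈ Ksub d (j + 1) := by
  have he : stdBasis d j - stdBasis d (j - 1) ∈ Ksub d (j + 1) :=
    Submodule.sub_mem _ (stdBasis_mem_Ksub d (by omega)) (stdBasis_mem_Ksub d (by omega))
  unfold gradh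
  split_ifs
  · exact he
  · simpa using Submodule.neg_mem _ he
  · exact Submodule.zero_mem _

theorem gradh_eq_zero_of_mem_Ksub {d L j : ℕ} {x : EuclideanSpace ℝ (Fin d)}
    (hx : x ∈ Ksub d L) (hj : L < j) : gradh d j x = 0 := by
  simp [gradh, inner_stdBasis_eq_zero_of_mem_Ksub hx (by omega : L ≤ j - 1),
    inner_stdBasis_eq_zero_of_mem_Ksub hx hj.le]

theorem gradh_mem_Ksub_of_ne {d L j : ℕ} {x : EuclideanSpace ℝ (Fin d)}
    (hx : x ∈ Ksub d L) (hj : j ≠ L) : gradh d j x ∈ Ksub d L := by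
  rcases Nat.lt_or_gt_of_ne hj with hlt | hgt
  · exact Ksub_mono d hlt (gradh_mem_Ksub d j x)
  · rw [gradh_eq_zero_of_mem_Ksub hx hgt]
    exact Submodule.zero_mem _

theorem Nat.succ_div_mod_cases {m : ℕ} (hm : 0 < m) (k : ℕ) :
    ((k + 1) / m = k / m ∧ (k + 1) % m = k % m + 1) ∨
      ((k + 1) / m = k / m + 1 ∧ (k + 1) % m = 0 ∧ k % m + 1 = m) := by
  have hk := Nat.div_add_mod k m
  have hlt := Nat.mod_lt k hm
  rcases Nat.lt_or_ge (k % m + 1) m with h | h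
  · have hsucc : k + 1 = m * (k / m) + (k % m + 1) := by omega
    left
    rw [hsucc, Nat.mul_add_div hm, Nat.div_eq_of_lt h, Nat.mul_add_mod, Nat.mod_eq_of_lt h]
    simp
  · have hsucc : k + 1 = m * (k / m + 1) := by rw [Nat.mul_succ]; omega
    right
    rw [hsucc, Nat.mul_div_cancel_left _ hm, Nat.mul_mod_right]
    omega

def nodeLevel (m k i : ℕ) : ℕ :=
  if i ≤ m ∨ (2 * m < i ∧ i ≤ 2 * m + k % m + 1) then 2 * (k / m) + 2 else 2 * (k / m) + 1

theorem nodeLevel_le (m k i : ℕ) : nodeLevel m k i ≤ 2 * (k / m) + 2 := by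
  unfold nodeLevel; split_ifs <;> omega

theorem le_nodeLevel (m k i : ℕ) : 2 * (k / m) + 1 ≤ nodeLevel m k i := by
  unfold nodeLevel; split_ifs <;> omega

theorem nodeLevel_center (m k : ℕ) : nodeLevel m k (2 * m + 1 + k % m) = 2 * (k / m) + 2 := by
  rw [nodeLevel, if_pos (Or.inr ⟨by omega, by omega⟩)]

theorem nodeLevel_succ_center_le {m : ℕ} (hm : 0 < m) (k : ℕ) :
    nodeLevel m k (2 * m + 1 + (k + 1) % m) ≤ 2 * ((k + 1) / m) + 1 := by
  unfold nodeLevel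
  rcases Nat.succ_div_mod_cases hm k with h | h <;> split_ifs <;> omega

theorem nodeLevel_mono {m : ℕ} (hm : 0 < m) (i : ℕ) : Monotone fun k => nodeLevel m k i := by
  refine monotone_nat_of_le_succ fun k => ?_
  unfold nodeLevel
  rcases Nat.succ_div_mod_cases hm k with h | h <;> split_ifs <;> omega

theorem nodeLevel_le_of_adj_center {m s k i j : ℕ} (hm : 0 < m) (hsk : s + 1 ≤ k)
    (hadj : j = 2 * m + 1 + (s + 1) % m ∨ i = 2 * m + 1 + (s + 1) % m) :
    nodeLevel m s j ≤ nodeLevel m k i := by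
  have hdiv : s / m ≤ (s + 1) / m := Nat.div_le_div_right (Nat.le_succ s)
  rcases hadj with rfl | rfl
  · calc nodeLevel m s _ ≤ 2 * ((s + 1) / m) + 1 := nodeLevel_succ_center_le hm s
      _ ≤ nodeLevel m (s + 1) i := le_nodeLevel m (s + 1) i
      _ ≤ nodeLevel m k i := nodeLevel_mono hm i hsk
  · calc nodeLevel m s j ≤ 2 * (s / m) + 2 := nodeLevel_le m s j
      _ ≤ 2 * ((s + 1) / m) + 2 := by omega
      _ = nodeLevel m (s + 1) _ := (nodeLevel_center m (s + 1)).symm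
      _ ≤ nodeLevel m k _ := nodeLevel_mono hm _ hsk

theorem oracle_mapsTo_Ksub_nodeLevel (d m k i : ℕ) (a : ℝ) :
    Set.MapsTo (oracle d (3 * m) a i) (Ksub d (nodeLevel m k i)) (Ksub d (nodeLevel m k i)) := by
  intro x hx
  have hm1 : 3 * m / 3 = m := by omega
  have hm2 : 2 * (3 * m) / 3 = 2 * m := by omega
  simp only [SetLike.mem_coe] at hx ⊢
  unfold oracle
  rw [hm1, hm2]
  split_ifs with h1 h2
  · rw [nodeLevel, if_pos (Or.inl h1)] at hx ⊢
    refine Submodule.sub_mem _ (Submodule.smul_mem _ _ (Submodule.sum_mem _ fun j _ => ?_))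
      (Submodule.smul_mem _ _ (stdBasis_mem_Ksub d (by omega)))
    exact gradh_mem_Ksub_of_ne hx (by omega)
  · rw [nodeLevel, if_neg (by omega)] at hx ⊢
    refine Submodule.smul_mem _ _ (Submodule.sum_mem _ fun j _ => ?_)
    exact gradh_mem_Ksub_of_ne hx (by omega)
  · exact Submodule.zero_mem _

theorem memloc_subset {d : ℕ} {τsub τ : ℝ}
    {gfun : ℕ → EuclideanSpace ℝ (Fin d) → EuclideanSpace ℝ (Fin d)}
    {mem : ℕ → ℝ → Set (EuclideanSpace ℝ (Fin d))} {i : ℕ}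
    {K : Submodule ℝ (EuclideanSpace ℝ (Fin d))}
    (hmem : τsub ≤ τ → mem i (τ - τsub) ⊆ K) (hg : Set.MapsTo (gfun i) K K) :
    memloc d τsub gfun mem i τ ⊆ K := by
  unfold memloc
  split_ifs with h
  · exact Submodule.span_le.mpr
      (Set.union_subset (hmem h) (Set.image_subset_iff.mpr ((hmem h).trans hg)))
  · exact Set.empty_subset _

theorem memcom_subset {d n : ℕ} {τcom τ : ℝ} {mem : ℕ → ℝ → Set (EuclideanSpace ℝ (Fin d))}
    {i : ℕ} {K : Submodule ℝ (EuclideanSpace ℝ (Fin d))}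
    (hmem : τcom ≤ τ → ∀ j ∈ inEdges n τcom τ i, mem j (τ - τcom) ⊆ K) :
    memcom d n τcom mem i τ ⊆ K := by
  unfold memcom
  split_ifs with h
  · exact Submodule.span_le.mpr (Set.iUnion₂_subset (hmem h))
  · exact Set.empty_subset _

theorem Real.induction_of_step {δ : ℝ} (hδ : 0 < δ) {P : ℝ → Prop}
    (step : ∀ τ, 0 ≤ τ → (∀ σ, 0 ≤ σ → σ ≤ τ - δ → P σ) → P τ) {τ : ℝ} (hτ : 0 ≤ τ) : P τ := by
  suffices h : ∀ N : ℕ, ∀ τ, 0 ≤ τ → τ < N * δ → P τ by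
    obtain ⟨N, hN⟩ := exists_nat_gt (τ / δ)
    exact h N τ hτ ((div_lt_iff₀ hδ).mp hN)
  intro N
  induction N with
  | zero =>
    intro τ hτ hlt
    rw [Nat.cast_zero, zero_mul] at hlt
    linarith
  | succ N ih =>
    intro τ hτ hlt
    refine step τ hτ fun σ hσ hστ => ih σ hσ ?_
    push_cast at hlt
    linarith

theorem mem_subset_Ksub_nodeLevel {d m : ℕ} {a τcom τsub : ℝ} (hm : 0 < m) (hcom : 0 < τcom)
    (hsub : 0 < τsub) {mem : ℕ → ℝ → Set (EuclideanSpace ℝ (Fin d))}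
    (hmem : ∀ i τ, 0 ≤ τ → mem i τ ⊆
      {0} ∪ memloc d τsub (oracle d (3 * m) a) mem i τ ∪ memcom d (3 * m) τcom mem i τ)
    {τ : ℝ} (hτ : 0 ≤ τ) {k : ℕ} (hτk : τ < (k + 1) * τcom) (i : ℕ) :
    mem i τ ⊆ Ksub d (nodeLevel m k i) := by
  refine Real.induction_of_step (P := fun τ => ∀ k : ℕ, τ < (k + 1) * τcom → ∀ i,
    mem i τ ⊆ Ksub d (nodeLevel m k i)) (lt_min hcom hsub) (fun τ hτ ih k hτk i => ?_) hτ k hτk i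
  refine (hmem i τ hτ).trans (Set.union_subset (Set.union_subset ?_ ?_) ?_)
  · simp
  · refine memloc_subset (fun hτsub => ?_) (oracle_mapsTo_Ksub_nodeLevel d m k i a)
    exact ih _ (by linarith) (by linarith [min_le_right τcom τsub]) k (by linarith) i
  · refine memcom_subset fun hτcom j hj => ?_
    have ht1 : 1 ≤ ⌊τ / τcom⌋₊ := Nat.le_floor (by rw [Nat.cast_one, le_div_iff₀ hcom]; linarith)
    obtain ⟨s, hs⟩ : ∃ s, ⌊τ / τcom⌋₊ = s + 1 := ⟨_, (Nat.sub_add_cancel ht1).symm⟩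
    have hsk : s + 1 < k + 1 := hs ▸ (Nat.floor_lt (div_nonneg hτ hcom.le)).mpr
      (by rw [div_lt_iff₀ hcom]; exact_mod_cast hτk)
    have hτs : τ - τcom < (s + 1) * τcom := by
      have := (div_lt_iff₀ hcom).mp (Nat.lt_floor_add_one (τ / τcom))
      rw [hs] at this
      push_cast at this
      linarith
    have hcenter : center (3 * m) τcom τ = 2 * m + 1 + (s + 1) % m := by
      rw [center, hs, Nat.mul_div_cancel_left m three_pos]
      omega
    obtain ⟨-, -, hadj⟩ := hj
    rw [hcenter] at hadj
    refine (ih _ (by linarith) (by linarith [min_le_left τcom τsub]) s hτs j).trans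
      (Ksub_mono d (nodeLevel_le_of_adj_center hm (by omega) (by tauto)))

theorem stmt9_general (d n : ℕ) (hn : 3 ≤ n) (hn3 : 3 ∣ n)
    (a τcom τsub : ℝ) (hcom : 0 < τcom) (hsub : 0 < τsub)
    (mem : ℕ → ℝ → Set (EuclideanSpace ℝ (Fin d)))
    (hmem : ∀ i τ, 0 ≤ τ →
      mem i τ ⊆ {0} ∪ memloc d τsub (oracle d n a) mem i τ ∪ memcom d n τcom mem i τ) :
    ∀ k < n * (d - 1) / 6, ∀ τ : ℝ, 0 ≤ τ → τ < ((k : ℝ) + 1) * τcom →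
      ∀ i, 1 ≤ i → i ≤ n →
        ((i ≤ n / 3 ∨ (2 * n / 3 < i ∧ i ≤ 2 * n / 3 + k % (n / 3) + 1)) →
          mem i τ ⊆ ↑(Ksub d (2 * (3 * k / n) + 2))) ∧
        (((n / 3 < i ∧ i ≤ 2 * n / 3) ∨ (2 * n / 3 + k % (n / 3) + 1 < i ∧ i ≤ n)) →
          mem i τ ⊆ ↑(Ksub d (2 * (3 * k / n) + 1))) := by
  obtain ⟨m, rfl⟩ := hn3
  intro k _ τ hτ hτk i _ _
  have hlevel := mem_subset_Ksub_nodeLevel (by omega) hcom hsub hmem hτ hτk i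
  rw [nodeLevel] at hlevel
  rw [Nat.mul_div_mul_left k m three_pos, Nat.mul_div_cancel_left m three_pos,
    show 2 * (3 * m) / 3 = 2 * m by omega]
  constructor
  · intro hV
    rwa [if_pos hV] at hlevel
  · intro hV
    rwa [if_neg (by omega)] at hlevel

theorem stmt9 (d n : ℕ) (hd : 3 ≤ d) (hodd : d % 2 = 1) (hn : 3 ≤ n) (hn3 : 3 ∣ n)
    (a τcom τsub : ℝ) (ha : 0 < a) (hcom : 0 < τcom) (hsub : 0 < τsub)
    (mem : ℕ → ℝ → Set (EuclideanSpace ℝ (Fin d)))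
    (hmem0 : ∀ i, mem i 0 = {0})
    (hmem : ∀ i τ, 0 ≤ τ →
      mem i τ ⊆ {0} ∪ memloc d τsub (oracle d n a) mem i τ ∪ memcom d n τcom mem i τ) :
    ∀ k < n * (d - 1) / 6, ∀ τ : ℝ, 0 ≤ τ → τ < ((k : ℝ) + 1) * τcom →
      ∀ i, 1 ≤ i → i ≤ n →
        ((i ≤ n / 3 ∨ (2 * n / 3 < i ∧ i ≤ 2 * n / 3 + k % (n / 3) + 1)) →
          mem i τ ⊆ ↑(Ksub d (2 * (3 * k / n) + 2))) ∧
        (((n / 3 < i ∧ i ≤ 2 * n / 3) ∨ (2 * n / 3 + k % (n / 3) + 1 < i ∧ i ≤ n)) →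
          mem i τ ⊆ ↑(Ksub d (2 * (3 * k / n) + 1))) :=
  stmt9_general d n hn hn3 a τcom τsub hcom hsub mem hmem
end
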